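/- Let m ≥ 1, let ε > 0 satisfy (1+ε)·cos(π/2^m) < cos(π/2^(m+1)), let C ⊆ ℝ² be a convex set, and let F : ℝ² → ℝ agree with an affine map on C. If F correctly classifies f_m, then C contains at most one point of V_ε. -/

import Mathlib

/-!
Two distinct pushed vertices `(1 + ε) • vertex m j` and `(1 + ε) • vertex m j'` lie outside `P m`,
each beyond the edge next to it, whereas their midpoint lies in the interior: its pairing with
any edge normal is `(1 + ε) cos α cos (π (j - j') / 2 ^ m) ≤ (1 + ε) cos (π / 2 ^ m)`, which is
below the apothem `cos (π / 2 ^ (m + 1))`. A function that is affine on a convex set containing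
both points is therefore `≤ 0` at the midpoint, while a correct classifier is positive there.
-/

open Real

/-- Outward unit normal of the `k`-th edge of the regular polygon `P m`. -/
noncomputable def polyNormal (m k : ℕ) : Fin 2 → ℝ :=
  ![Real.cos (π / 2 + (2 * (k : ℝ) + 1) * π / (2 : ℝ) ^ (m + 1)),
    Real.sin (π / 2 + (2 * (k : ℝ) + 1) * π / (2 : ℝ) ^ (m + 1))]

/-- The regular polygon `P m` with `2^(m+1)` vertices inscribed in the unit circle
with a vertex at `(0,1)`. -/
noncomputable def P (m : ℕ) : Set (Fin 2 → ℝ) :=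
  {x | ∀ k < 2 ^ (m + 1),
    x 0 * polyNormal m k 0 + x 1 * polyNormal m k 1 ≤ Real.cos (π / (2 : ℝ) ^ (m + 1))}

/-- `F` correctly classifies `f_m`: positive on the interior of `P m`,
nonpositive outside `P m`. -/
def CorrectlyClassifies (m : ℕ) (F : (Fin 2 → ℝ) → ℝ) : Prop :=
  (∀ x ∈ interior (P m), 0 < F x) ∧ ∀ x ∉ P m, F x ≤ 0

/-- The `j`-th "even" vertex of `P m` (every second vertex as `j` ranges over `j < 2^m`). -/
noncomputable def vertex (m j : ℕ) : Fin 2 → ℝ :=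
  ![Real.cos (π / 2 + 2 * π * (j : ℝ) / (2 : ℝ) ^ m),
    Real.sin (π / 2 + 2 * π * (j : ℝ) / (2 : ℝ) ^ m)]

/-- Every second vertex of `P m`, pushed radially outward by the factor `1 + ε`. -/
noncomputable def Vset (m : ℕ) (ε : ℝ) : Set (Fin 2 → ℝ) :=
  {p | ∃ j < 2 ^ m, p = (1 + ε) • vertex m j}

theorem cos_sin_dotProduct_cos_sin (θ φ : ℝ) :
    ![cos θ, sin θ] ⬝ᵥ ![cos φ, sin φ] = cos (θ - φ) := by
  simp [dotProduct, Fin.sum_univ_two, cos_sub]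

theorem cos_add_cos_le_two_mul_abs_cos (a b : ℝ) : cos a + cos b ≤ 2 * |cos ((a - b) / 2)| := by
  rw [cos_add_cos, mul_right_comm]
  calc 2 * cos ((a - b) / 2) * cos ((a + b) / 2)
      ≤ |2 * cos ((a - b) / 2)| * |cos ((a + b) / 2)| := by rw [← abs_mul]; exact le_abs_self _
    _ ≤ |2 * cos ((a - b) / 2)| * 1 := by gcongr; exact abs_cos_le_one _
    _ = 2 * |cos ((a - b) / 2)| := by rw [mul_one, abs_mul, abs_two]

theorem abs_cos_pi_mul_div_le {N : ℕ} {d : ℤ} (hd : d ≠ 0) (hdN : |d| < N) :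
    |cos (π * d / N)| ≤ cos (π / N) := by
  have hN : (0 : ℝ) < N := by have := abs_nonneg d; exact_mod_cast this.trans_lt hdN
  have hd1 : (1 : ℝ) ≤ |(d : ℝ)| := by exact_mod_cast Int.one_le_abs hd
  have hdN' : |(d : ℝ)| + 1 ≤ N := by exact_mod_cast Int.add_one_le_of_lt hdN
  set t := π * |(d : ℝ)| / N
  have ht_lo : π / N ≤ t :=
    div_le_div_of_nonneg_right (le_mul_of_one_le_right pi_pos.le hd1) hN.le
  have ht_hi : t ≤ π - π / N := by
    rw [div_le_iff₀ hN, sub_mul, div_mul_cancel₀ _ hN.ne']; nlinarith [pi_pos]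
  have hπN : 0 ≤ π / N := by positivity
  have h_abs : |cos (π * d / N)| = |cos t| := by
    rw [← cos_abs, abs_div, abs_mul, abs_of_pos pi_pos, abs_of_pos hN]
  rw [h_abs, abs_le]
  constructor
  · have := cos_le_cos_of_nonneg_of_le_pi hπN (by linarith) (le_sub_comm.mp ht_hi)
    rw [cos_pi_sub] at this
    linarith
  · exact cos_le_cos_of_nonneg_of_le_pi hπN (by linarith) ht_lo

section RegularPolygon

variable {m : ℕ}

theorem mem_P_iff {x : Fin 2 → ℝ} :
    x ∈ P m ↔ ∀ k < 2 ^ (m + 1), x ⬝ᵥ polyNormal m k ≤ cos (π / 2 ^ (m + 1)) := by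
  simp [P, dotProduct, Fin.sum_univ_two]

theorem mem_interior_P_of_forall_lt {x : Fin 2 → ℝ}
    (hx : ∀ k < 2 ^ (m + 1), x ⬝ᵥ polyNormal m k < cos (π / 2 ^ (m + 1))) :
    x ∈ interior (P m) := by
  let S := ⋂ k ∈ Finset.range (2 ^ (m + 1)),
    {y : Fin 2 → ℝ | y ⬝ᵥ polyNormal m k < cos (π / 2 ^ (m + 1))}
  have hS_open : IsOpen S :=
    isOpen_biInter_finset fun k _ => isOpen_lt (by fun_prop) continuous_const
  have hS_sub : S ⊆ P m := fun y hy => mem_P_iff.mpr fun k hk =>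
    (Set.mem_iInter₂.mp hy k (Finset.mem_range.mpr hk)).le
  exact interior_maximal hS_sub hS_open <|
    Set.mem_iInter₂.mpr fun k hk => hx k (Finset.mem_range.mp hk)

theorem vertex_dotProduct_polyNormal (j k : ℕ) :
    vertex m j ⬝ᵥ polyNormal m k =
      cos (2 * π * j / 2 ^ m - (2 * k + 1) * π / 2 ^ (m + 1)) := by
  rw [vertex, polyNormal, cos_sin_dotProduct_cos_sin, add_sub_add_left_eq_sub]

theorem cos_pi_div_two_pow_succ_pos (hm : 1 ≤ m) : 0 < cos (π / 2 ^ (m + 1)) := by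
  apply cos_pos_of_mem_Ioo
  constructor
  · linarith [show 0 < π / 2 ^ (m + 1) by positivity, pi_pos]
  · calc π / 2 ^ (m + 1) ≤ π / 2 ^ 2 := by gcongr; norm_num; omega
      _ < π / 2 := by linarith [pi_pos]

theorem vertex_dotProduct_polyNormal_two_mul (j : ℕ) :
    vertex m j ⬝ᵥ polyNormal m (2 * j) = cos (π / 2 ^ (m + 1)) := by
  rw [vertex_dotProduct_polyNormal, ← cos_neg]
  congr 1
  push_cast
  field_simp
  ring

theorem smul_vertex_not_mem_P (hm : 1 ≤ m) {r : ℝ} (hr : 1 < r) {j : ℕ} (hj : j < 2 ^ m) :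
    r • vertex m j ∉ P m := by
  intro h
  have := mem_P_iff.mp h (2 * j) (by rw [pow_succ]; omega)
  rw [smul_dotProduct, vertex_dotProduct_polyNormal_two_mul, smul_eq_mul] at this
  nlinarith [cos_pi_div_two_pow_succ_pos hm]

theorem vertex_add_vertex_dotProduct_polyNormal_le {j j' : ℕ} (hj : j < 2 ^ m) (hj' : j' < 2 ^ m)
    (hjj' : j ≠ j') (k : ℕ) :
    (vertex m j + vertex m j') ⬝ᵥ polyNormal m k ≤ 2 * cos (π / 2 ^ m) := by
  rw [add_dotProduct, vertex_dotProduct_polyNormal, vertex_dotProduct_polyNormal]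
  refine (cos_add_cos_le_two_mul_abs_cos _ _).trans ?_
  have hangle : (2 * π * j / 2 ^ m - (2 * k + 1) * π / 2 ^ (m + 1) -
      (2 * π * j' / 2 ^ m - (2 * k + 1) * π / 2 ^ (m + 1))) / 2 =
      π * ((j - j' : ℤ) : ℝ) / ((2 ^ m : ℕ) : ℝ) := by
    push_cast; ring
  have hbound := abs_cos_pi_mul_div_le (N := 2 ^ m) (d := j - j') (by omega) (by
    rw [abs_lt]; constructor <;> omega)
  push_cast at hbound
  rw [hangle]
  push_cast
  linarith

theorem midpoint_smul_vertex_mem_interior_P {r : ℝ} (hr : 0 ≤ r)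
    (hrm : r * cos (π / 2 ^ m) < cos (π / 2 ^ (m + 1)))
    {j j' : ℕ} (hj : j < 2 ^ m) (hj' : j' < 2 ^ m) (hjj' : j ≠ j') :
    midpoint ℝ (r • vertex m j) (r • vertex m j') ∈ interior (P m) := by
  refine mem_interior_P_of_forall_lt fun k _ => ?_
  have hmid : midpoint ℝ (r • vertex m j) (r • vertex m j') ⬝ᵥ polyNormal m k =
      r / 2 * ((vertex m j + vertex m j') ⬝ᵥ polyNormal m k) := by
    rw [midpoint_eq_smul_add, ← smul_add, smul_smul, smul_dotProduct, smul_eq_mul]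
    simp only [invOf_eq_inv]
    ring
  have := vertex_add_vertex_dotProduct_polyNormal_le hj hj' hjj' k
  rw [hmid]
  nlinarith

end RegularPolygon

/-- A convex region on which a correct classifier is affine contains
at most one point of `V_ε`. -/
theorem convex_piece_contains_at_most_one_pushed_vertex (m : ℕ) (hm : 1 ≤ m)
    (ε : ℝ) (hε : 0 < ε)
    (hε2 : (1 + ε) * Real.cos (π / (2 : ℝ) ^ m) < Real.cos (π / (2 : ℝ) ^ (m + 1)))
    (C : Set (Fin 2 → ℝ)) (hC : Convex ℝ C)
    (F : (Fin 2 → ℝ) → ℝ) (g : (Fin 2 → ℝ) →ᵃ[ℝ] ℝ) (hFg : ∀ x ∈ C, F x = g x)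
    (hcls : CorrectlyClassifies m F) :
    ∀ p ∈ Vset m ε ∩ C, ∀ q ∈ Vset m ε ∩ C, p = q := by
  rintro _ ⟨⟨j, hj, rfl⟩, hpC⟩ _ ⟨⟨j', hj', rfl⟩, hqC⟩
  by_contra hpq
  have hjj' : j ≠ j' := by rintro rfl; exact hpq rfl
  have hFp := hcls.2 _ (smul_vertex_not_mem_P hm (r := 1 + ε) (by linarith) hj)
  have hFq := hcls.2 _ (smul_vertex_not_mem_P hm (r := 1 + ε) (by linarith) hj')
  have hmid_pos := hcls.1 _ (midpoint_smul_vertex_mem_interior_P (by linarith) hε2 hj hj' hjj')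
  have hmid_nonpos : F (midpoint ℝ ((1 + ε) • vertex m j) ((1 + ε) • vertex m j')) ≤ 0 := by
    rw [hFg _ (hC.midpoint_mem hpC hqC), g.map_midpoint, ← hFg _ hpC, ← hFg _ hqC]
    exact (convex_Iic (0 : ℝ)).midpoint_mem hFp hFq
  exact hmid_nonpos.not_gt hmid_pos
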